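/- The map H_III^B(α,β): (x,y) ↦ (y·Q⁻¹, x·Q) with Q = (αxy+1)/(βxy+1) satisfies the Yang–Baxter relation on all triples where the relevant denominators are nonzero. -/

import Mathlib

open Function

variable {K : Type*} [Field K]

/-- lift a map on pairs to act on coordinates 1,2 of a triple -/
def lift12 {X : Type*} (f : X × X → X × X) : X × X × X → X × X × X :=
  fun p => ((f (p.1, p.2.1)).1, (f (p.1, p.2.1)).2, p.2.2)

/-- lift to coordinates 1,3 -/
def lift13 {X : Type*} (f : X × X → X × X) : X × X × X → X × X × X :=
  fun p => ((f (p.1, p.2.2)).1, p.2.1, (f (p.1, p.2.2)).2)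

/-- lift to coordinates 2,3 -/
def lift23 {X : Type*} (f : X × X → X × X) : X × X × X → X × X × X :=
  fun p => (p.1, (f (p.2.1, p.2.2)).1, (f (p.2.1, p.2.2)).2)

def HIIIBMap (a b : K) : K × K → K × K :=
  fun p => (p.2 * ((b*p.1*p.2 + 1)/(a*p.1*p.2 + 1)), p.1 * ((a*p.1*p.2 + 1)/(b*p.1*p.2 + 1)))

/-!
Each move preserves the product of the two entries it acts on, so with `pᵢ = aᵢxy + 1` and
`qᵢ = aᵢyz + 1` every denominator `a u v + 1` met on either side is a ratio of polynomials in
`xy` and `yz`. The point is that the denominators of the third move factor: on the left they are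
`p₂e₁/c₃` and `p₁e₃/c₃`, on the right `q₃c₁/e₁` and `q₂c₃/e₁` (with `c₁, c₃, e₁, e₃` as in
`HIIIBComposite`), so after cancellation both sides equal `HIIIBComposite a₁ a₂ a₃ x y z`.
-/

theorem HIIIBMap_eq_of_mul_eq {a b x y r A B : K} (hr : r ≠ 0)
    (hA : r * (a * x * y + 1) = A) (hB : r * (b * x * y + 1) = B) :
    HIIIBMap a b (x, y) = (y * (B / A), x * (A / B)) := by
  subst hA hB
  simp only [HIIIBMap, mul_div_mul_left _ _ hr]

/-- `c₁, c₃` are `p₁ (a x₁ z + 1)` for `a = a₁, a₃` after the first move `x₁ = y p₂/p₁` on the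
left, and `e₁, e₃` are `q₃ (a x z₁ + 1)` after the first move `z₁ = y q₂/q₃` on the right. -/
def HIIIBComposite (a1 a2 a3 x y z : K) : K × K × K :=
  let c1 := a1 * y * z * (a2 * x * y + 1) + a1 * x * y + 1
  let c3 := a3 * y * z * (a2 * x * y + 1) + a1 * x * y + 1
  let e1 := a1 * x * y * (a2 * y * z + 1) + a3 * y * z + 1
  let e3 := a3 * x * y * (a2 * y * z + 1) + a3 * y * z + 1
  (z * (c3 / c1), y * (c1 * e3 / (c3 * e1)), x * (e1 / e3))

section
variable {a1 a2 a3 x y z : K}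

theorem lift23_lift13_lift12_HIIIBMap (hp1 : a1 * x * y + 1 ≠ 0) (hp2 : a2 * x * y + 1 ≠ 0)
    (hc3 : a3 * y * z * (a2 * x * y + 1) + a1 * x * y + 1 ≠ 0) :
    lift23 (HIIIBMap a2 a3) (lift13 (HIIIBMap a1 a3) (lift12 (HIIIBMap a1 a2) (x, y, z))) =
      HIIIBComposite a1 a2 a3 x y z := by
  simp only [HIIIBComposite]
  set p1 := a1 * x * y + 1
  set p2 := a2 * x * y + 1
  set c1 := a1 * y * z * p2 + a1 * x * y + 1
  set c3 := a3 * y * z * p2 + a1 * x * y + 1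
  set e1 := a1 * x * y * (a2 * y * z + 1) + a3 * y * z + 1
  set e3 := a3 * x * y * (a2 * y * z + 1) + a3 * y * z + 1
  have move12 : HIIIBMap a1 a2 (x, y) = (y * (p2 / p1), x * (p1 / p2)) := rfl
  have move13 : HIIIBMap a1 a3 (y * (p2 / p1), z) = (z * (c3 / c1), y * (p2 / p1) * (c1 / c3)) :=
    HIIIBMap_eq_of_mul_eq hp1 (by field_simp; ring) (by field_simp; ring)
  have move23 : HIIIBMap a2 a3 (x * (p1 / p2), y * (p2 / p1) * (c1 / c3)) =
      (y * (p2 / p1) * (c1 / c3) * (p1 * e3 / (p2 * e1)), x * (p1 / p2) * (p2 * e1 / (p1 * e3))) :=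
    HIIIBMap_eq_of_mul_eq hc3 (by field_simp; ring) (by field_simp; ring)
  simp only [lift12, lift13, lift23, move12, move13, move23]
  refine Prod.ext ?_ (Prod.ext ?_ ?_)
  · rfl
  · field_simp
  · field_simp

theorem lift12_lift13_lift23_HIIIBMap (hq2 : a2 * y * z + 1 ≠ 0) (hq3 : a3 * y * z + 1 ≠ 0)
    (he1 : a1 * x * y * (a2 * y * z + 1) + a3 * y * z + 1 ≠ 0) :
    lift12 (HIIIBMap a1 a2) (lift13 (HIIIBMap a1 a3) (lift23 (HIIIBMap a2 a3) (x, y, z))) =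
      HIIIBComposite a1 a2 a3 x y z := by
  simp only [HIIIBComposite]
  set q2 := a2 * y * z + 1
  set c1 := a1 * y * z * (a2 * x * y + 1) + a1 * x * y + 1
  set c3 := a3 * y * z * (a2 * x * y + 1) + a1 * x * y + 1
  set e1 := a1 * x * y * q2 + a3 * y * z + 1
  set e3 := a3 * x * y * q2 + a3 * y * z + 1
  set q3 := a3 * y * z + 1
  have move23 : HIIIBMap a2 a3 (y, z) = (z * (q3 / q2), y * (q2 / q3)) := rfl
  have move13 : HIIIBMap a1 a3 (x, y * (q2 / q3)) = (y * (q2 / q3) * (e3 / e1), x * (e1 / e3)) :=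
    HIIIBMap_eq_of_mul_eq hq3 (by field_simp; ring) (by field_simp; ring)
  have move12 : HIIIBMap a1 a2 (y * (q2 / q3) * (e3 / e1), z * (q3 / q2)) =
      (z * (q3 / q2) * (q2 * c3 / (q3 * c1)), y * (q2 / q3) * (e3 / e1) * (q3 * c1 / (q2 * c3))) :=
    HIIIBMap_eq_of_mul_eq he1 (by field_simp; ring) (by field_simp; ring)
  simp only [lift12, lift13, lift23, move12, move13, move23]
  refine Prod.ext ?_ (Prod.ext ?_ ?_)
  · field_simp
  · field_simp
  · rfl

end

theorem yangBaxter_HIIIB_general (a1 a2 a3 x y z : K)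
    (h1 : (a1*x*y + 1) ≠ 0)
    (h2 : (a2*x*y + 1) ≠ 0)
    (h4 : (a3*(lift12 (HIIIBMap a1 a2) (x, y, z)).1*(lift12 (HIIIBMap a1 a2) (x, y, z)).2.2 + 1) ≠ 0)
    (h7 : (a2*y*z + 1) ≠ 0)
    (h8 : (a3*y*z + 1) ≠ 0)
    (h9 : (a1*(lift23 (HIIIBMap a2 a3) (x, y, z)).1*(lift23 (HIIIBMap a2 a3) (x, y, z)).2.2 + 1) ≠ 0) :
    lift23 (HIIIBMap a2 a3) (lift13 (HIIIBMap a1 a3) (lift12 (HIIIBMap a1 a2) (x, y, z))) =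
      lift12 (HIIIBMap a1 a2) (lift13 (HIIIBMap a1 a3) (lift23 (HIIIBMap a2 a3) (x, y, z))) := by
  have hc3 : a3 * y * z * (a2 * x * y + 1) + a1 * x * y + 1 ≠ 0 := by
    convert mul_ne_zero h1 h4 using 1
    simp only [lift12, HIIIBMap]
    linear_combination (-(a3 * y * z)) * mul_div_cancel₀ (a2 * x * y + 1) h1
  have he1 : a1 * x * y * (a2 * y * z + 1) + a3 * y * z + 1 ≠ 0 := by
    convert mul_ne_zero h8 h9 using 1
    simp only [lift23, HIIIBMap]
    linear_combination (-(a1 * x * y)) * mul_div_cancel₀ (a2 * y * z + 1) h8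
  rw [lift23_lift13_lift12_HIIIBMap h1 h2 hc3, lift12_lift13_lift23_HIIIBMap h7 h8 he1]

theorem yangBaxter_HIIIB (a1 a2 a3 x y z : K)
    (h1 : (a1*x*y + 1) ≠ 0)
    (h2 : (a2*x*y + 1) ≠ 0)
    (h3 : (a1*(lift12 (HIIIBMap a1 a2) (x, y, z)).1*(lift12 (HIIIBMap a1 a2) (x, y, z)).2.2 + 1) ≠ 0)
    (h4 : (a3*(lift12 (HIIIBMap a1 a2) (x, y, z)).1*(lift12 (HIIIBMap a1 a2) (x, y, z)).2.2 + 1) ≠ 0)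
    (h5 : (a2*(lift13 (HIIIBMap a1 a3) (lift12 (HIIIBMap a1 a2) (x, y, z))).2.1*(lift13 (HIIIBMap a1 a3) (lift12 (HIIIBMap a1 a2) (x, y, z))).2.2 + 1) ≠ 0)
    (h6 : (a3*(lift13 (HIIIBMap a1 a3) (lift12 (HIIIBMap a1 a2) (x, y, z))).2.1*(lift13 (HIIIBMap a1 a3) (lift12 (HIIIBMap a1 a2) (x, y, z))).2.2 + 1) ≠ 0)
    (h7 : (a2*y*z + 1) ≠ 0)
    (h8 : (a3*y*z + 1) ≠ 0)
    (h9 : (a1*(lift23 (HIIIBMap a2 a3) (x, y, z)).1*(lift23 (HIIIBMap a2 a3) (x, y, z)).2.2 + 1) ≠ 0)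
    (h10 : (a3*(lift23 (HIIIBMap a2 a3) (x, y, z)).1*(lift23 (HIIIBMap a2 a3) (x, y, z)).2.2 + 1) ≠ 0)
    (h11 : (a1*(lift13 (HIIIBMap a1 a3) (lift23 (HIIIBMap a2 a3) (x, y, z))).1*(lift13 (HIIIBMap a1 a3) (lift23 (HIIIBMap a2 a3) (x, y, z))).2.1 + 1) ≠ 0)
    (h12 : (a2*(lift13 (HIIIBMap a1 a3) (lift23 (HIIIBMap a2 a3) (x, y, z))).1*(lift13 (HIIIBMap a1 a3) (lift23 (HIIIBMap a2 a3) (x, y, z))).2.1 + 1) ≠ 0) :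
    lift23 (HIIIBMap a2 a3) (lift13 (HIIIBMap a1 a3) (lift12 (HIIIBMap a1 a2) (x, y, z))) =
      lift12 (HIIIBMap a1 a2) (lift13 (HIIIBMap a1 a3) (lift23 (HIIIBMap a2 a3) (x, y, z))) :=
  yangBaxter_HIIIB_general a1 a2 a3 x y z h1 h2 h4 h7 h8 h9
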